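/- arXiv:1402.6017 — 2 statements merged into one kernel-verified Lean document; each statement's English description precedes it below -/
import Mathlib

section
/- Let Γ be a finite metric tree and ν a finitely supported probability measure on Γ whose support points all have ν-mass that is an integer multiple of 1/(d-1), where d is even. Then the barycenter of ν (set of Q such that each component of Γ \ {Q} has ν-mass ≤ 1/2) consists of a single point. -/
/-!
Only the finitely many atoms of `ν` matter. Their masses are integer multiples of `1/(d-1)` with
`d - 1` odd, so no set has measure exactly `1/2`. For two barycenters `Q ≠ Q'`, the component of
`Γ ∖ {Q}` containing `Q'` and the component of `Γ ∖ {Q'}` containing `Q` cover `Γ`, so both would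
have measure exactly `1/2`: the barycenter is unique.

For existence, let `C` be a component of `Γ ∖ {Q}` of measure `> 1/2`, pick an atom `y ∈ C` and
walk along the arc `γ` from `y` to `Q`. The measure of the component of `Γ ∖ {γ t}` containing a
fixed point is lower semicontinuous in `t`, and by uniqueness of arcs the components containing `y`
and `Q` are disjoint, so at some time `t` both have measure `≤ 1/2`. Then either `γ t` is a
barycenter, or its heavy component lies in `C ∖ {y}` and contains fewer atoms than `C`.
-/

open Set Function Topology MeasureTheory
open scoped ENNReal

section Arcs

variable {X : Type*} [TopologicalSpace X]

theorem Set.Icc.convexComb_injective {a b : ℝ} {u v : Icc a b} (huv : u ≠ v) :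
    Injective (Icc.convexComb u v) := by
  intro s t hst
  have h : ((s : ℝ) - t) * ((v : ℝ) - u) = 0 := by
    have := congrArg Subtype.val hst
    simp only [Icc.coe_convexComb] at this
    linarith
  have hvu : (v : ℝ) - u ≠ 0 := sub_ne_zero.2 fun h => huv (Subtype.ext h).symm
  exact Subtype.ext (sub_eq_zero.1 ((mul_eq_zero.1 h).resolve_right hvu))

theorem Path.subpath_injective {x y : X} {γ : Path x y} (hγ : Injective γ) {t₀ t₁ : unitInterval}
    (h : t₀ ≠ t₁) : Injective (γ.subpath t₀ t₁) :=
  hγ.comp (Icc.convexComb_injective h)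

theorem Path.trans_injective {x y z : X} {p : Path x y} {q : Path y z} (hp : Injective p)
    (hq : Injective q) (hpq : range p ∩ range q ⊆ {y}) : Injective (p.trans q) := by
  have hq0 : ∀ a b, p a = q b → (b : ℝ) = 0 := fun a b hab => congrArg Subtype.val <|
    hq <| (hpq ⟨hab ▸ mem_range_self a, mem_range_self b⟩).trans q.source.symm
  intro s t hst
  rw [Path.trans_apply, Path.trans_apply] at hst
  split_ifs at hst with hs ht ht
  · have := congrArg Subtype.val (hp hst)
    ext; simp only at this; linarith
  · have := hq0 _ _ hst; simp only at this; linarith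
  · have := hq0 _ _ hst.symm; simp only at this; linarith
  · have := congrArg Subtype.val (hq hst)
    ext; simp only at this; linarith

-- Arcs are injective paths; the case `x = y` is listed separately because constant paths are
-- not injective.
def ArcJoinedIn (F : Set X) (x y : X) : Prop :=
  x = y ∨ ∃ γ : Path x y, Injective γ ∧ range γ ⊆ F

namespace ArcJoinedIn

variable {F G : Set X} {x y z : X}

theorem mono (h : ArcJoinedIn F x y) (hFG : F ⊆ G) : ArcJoinedIn G x y :=
  h.imp_right fun ⟨γ, hγ, hγF⟩ => ⟨γ, hγ, hγF.trans hFG⟩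

theorem symm (h : ArcJoinedIn F x y) : ArcJoinedIn F y x := by
  refine h.imp Eq.symm fun ⟨γ, hγ, hγF⟩ =>
    ⟨γ.symm, hγ.comp unitInterval.symm_bijective.injective, ?_⟩
  rwa [Path.symm_range]

theorem joinedIn (h : ArcJoinedIn F x y) (hx : x ∈ F) : JoinedIn F x y := by
  rcases h with rfl | ⟨γ, -, hγF⟩
  · exact JoinedIn.refl hx
  · exact ⟨γ, fun t => hγF (mem_range_self t)⟩

end ArcJoinedIn

theorem Path.arcJoinedIn_range {x y : X} {γ : Path x y} (hγ : Injective γ) (s t : unitInterval) :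
    ArcJoinedIn (range γ) (γ s) (γ t) := by
  rcases eq_or_ne s t with rfl | hst
  · exact Or.inl rfl
  · exact Or.inr ⟨γ.subpath s t, γ.subpath_injective hγ hst, by
      rw [Path.range_subpath]; exact image_subset_range _ _⟩

theorem Path.arcJoinedIn_union [T2Space X] {x y z : X} {p : Path x y} {q : Path y z}
    (hp : Injective p) (hq : Injective q) : ArcJoinedIn (range p ∪ range q) x z := by
  -- follow `p` up to its first point `p t₀ = q s₀` on `q`, then follow `q`
  obtain ⟨t₀, ⟨s₀, hs₀⟩, ht₀⟩ : ∃ t₀, IsLeast (p ⁻¹' range q) t₀ :=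
    ((isCompact_range q.continuous).isClosed.preimage p.continuous).isCompact.exists_isLeast
      ⟨1, 0, by simp⟩
  by_cases ht₀0 : t₀ = 0
  · have h := q.arcJoinedIn_range hq s₀ 1
    rw [hs₀, ht₀0, p.source, q.target] at h
    exact h.mono subset_union_right
  by_cases hs₀1 : s₀ = 1
  · have h := p.arcJoinedIn_range hp 0 t₀
    rw [← hs₀, hs₀1, p.source, q.target] at h
    exact h.mono subset_union_left
  let p' := p.subpath 0 t₀
  let q' := (q.subpath s₀ 1).cast hs₀.symm rfl
  have hq'q : range q' ⊆ range q := by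
    simp only [q', Path.cast_coe, Path.range_subpath]; exact image_subset_range _ _
  have hp'q' : range p' ∩ range q' ⊆ {p t₀} := by
    rintro _ ⟨hp', hq'⟩
    rw [Path.range_subpath_of_le _ _ _ unitInterval.nonneg'] at hp'
    obtain ⟨u, hu, rfl⟩ := hp'
    exact congrArg p (le_antisymm hu.2 (ht₀ (hq'q hq')))
  refine Or.inr ⟨(p'.trans q').cast p.source.symm q.target.symm, ?_, ?_⟩
  · rw [Path.cast_coe]
    exact Path.trans_injective (p.subpath_injective hp (Ne.symm ht₀0))
      (by simpa [q'] using q.subpath_injective hq hs₀1) hp'q'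
  · rw [Path.cast_coe, Path.trans_range]
    exact union_subset_union (by simp [p']) hq'q

theorem ArcJoinedIn.trans [T2Space X] {F : Set X} {x y z : X} (hxy : ArcJoinedIn F x y)
    (hyz : ArcJoinedIn F y z) : ArcJoinedIn F x z := by
  rcases hxy with rfl | ⟨p, hp, hpF⟩
  · exact hyz
  rcases hyz with rfl | ⟨q, hq, hqF⟩
  · exact Or.inr ⟨p, hp, hpF⟩
  exact (p.arcJoinedIn_union hp hq).mono (union_subset hpF hqF)

theorem Path.mem_connectedComponentIn_compl_target {x y : X} {γ : Path x y} (hγ : Injective γ)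
    {t : unitInterval} (ht : t ≠ 1) : γ t ∈ connectedComponentIn {y}ᶜ x := by
  refine (isPreconnected_range (γ.subpath 0 t).continuous).subset_connectedComponentIn
    ⟨0, by simp⟩ ?_ ⟨1, by simp⟩
  rw [Path.range_subpath_of_le _ _ _ unitInterval.nonneg']
  rintro _ ⟨u, hu, hyu⟩ rfl
  exact ht (le_antisymm unitInterval.le_one' (hγ (hyu.trans γ.target.symm) ▸ hu.2))

end Arcs

theorem Isometry.arcJoinedIn_closedBall {Y : Type*} [PseudoMetricSpace Y] {a b : ℝ}
    {e : Icc a b → Y} (he : Isometry e) (u v : Icc a b) :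
    ArcJoinedIn (Metric.closedBall (e u) (dist (e v) (e u))) (e u) (e v) := by
  rcases eq_or_ne u v with rfl | huv
  · exact Or.inl rfl
  let γ : Path (e u) (e v) :=
    { toFun := e ∘ Icc.convexComb u v
      continuous_toFun := he.continuous.comp <| Icc.continuous_convexComb_prod.comp
        (continuous_const.prodMk (continuous_const.prodMk continuous_id) :
          Continuous fun t : unitInterval => (u, v, t))
      source' := by simp
      target' := by simp }
  refine Or.inr ⟨γ, he.injective.comp (Icc.convexComb_injective huv), ?_⟩
  rintro _ ⟨t, rfl⟩
  simp only [γ, Path.coe_mk_mk, comp_apply, Metric.mem_closedBall, he.dist_eq, Subtype.dist_eq,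
    Icc.coe_convexComb, Real.dist_eq]
  rw [show (1 - t : ℝ) * u + t * v - u = t * (v - u) by ring, abs_mul, abs_of_nonneg t.2.1]
  exact mul_le_of_le_one_left (abs_nonneg _) t.2.2

def IsLocallyArcConnected (X : Type*) [TopologicalSpace X] : Prop :=
  ∀ z : X, ∀ V ∈ 𝓝 z, ∀ᶠ w in 𝓝 z, ArcJoinedIn V z w

def HasUniqueArcs (X : Type*) [TopologicalSpace X] : Prop :=
  ∀ (x y : X) (p q : Path x y), Injective p → Injective q → range p = range q

theorem isLocallyArcConnected_of_iUnion_isometry {Y : Type*} [MetricSpace Y] {ι : Type*}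
    [Finite ι] {φ : ι → Set Y} (hcov : ⋃ i, φ i = univ)
    (hφ : ∀ i, ∃ (a b : ℝ) (e : Icc a b → Y), Isometry e ∧ range e = φ i) :
    IsLocallyArcConnected Y := by
  intro z V hV
  have hclosed : ∀ i, IsClosed (φ i) := fun i => by
    obtain ⟨a, b, e, he, hrange⟩ := hφ i
    exact hrange ▸ (isCompact_range he.continuous).isClosed
  have hnear : ∀ᶠ w in 𝓝 z, ∀ i, w ∈ φ i → z ∈ φ i := by
    refine Filter.eventually_all.2 fun i => ?_
    by_cases hz : z ∈ φ i
    · exact .of_forall fun _ _ => hz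
    · exact Filter.eventually_of_mem ((hclosed i).isOpen_compl.mem_nhds hz)
        fun _ hw h => absurd h hw
  obtain ⟨ε, hε, hball⟩ := Metric.mem_nhds_iff.1 hV
  filter_upwards [hnear, Metric.ball_mem_nhds z hε] with w hw hwz
  obtain ⟨i, hwi⟩ := mem_iUnion.1 (hcov ▸ mem_univ w)
  obtain ⟨a, b, e, he, hrange⟩ := hφ i
  obtain ⟨u, rfl⟩ := hrange ▸ hw i hwi
  obtain ⟨v, rfl⟩ := hrange ▸ hwi
  exact (he.arcJoinedIn_closedBall u v).mono ((Metric.closedBall_subset_ball hwz).trans hball)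

section LocallyArcConnected

variable {X : Type*} [TopologicalSpace X]

theorem IsLocallyArcConnected.arcJoinedIn_of_mem_connectedComponentIn [T2Space X]
    (hX : IsLocallyArcConnected X) {U : Set X} (hU : IsOpen U) {x y : X}
    (hy : y ∈ connectedComponentIn U x) : ArcJoinedIn U x y := by
  have hx : x ∈ U := connectedComponentIn_nonempty_iff.1 ⟨y, hy⟩
  refine isPreconnected_connectedComponentIn.induction₂ (ArcJoinedIn U) (fun z hz => ?_)
    (fun _ _ _ _ _ _ => ArcJoinedIn.trans) (fun _ _ _ _ => ArcJoinedIn.symm)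
    (mem_connectedComponentIn hx) hy
  exact eventually_nhdsWithin_of_eventually_nhds
    (hX z U (hU.mem_nhds (connectedComponentIn_subset U x hz)))

theorem IsLocallyArcConnected.arcJoinedIn_univ [T2Space X] (hX : IsLocallyArcConnected X)
    (hpath : ∀ x y : X, Joined x y) (x y : X) : ArcJoinedIn univ x y :=
  hX.arcJoinedIn_of_mem_connectedComponentIn isOpen_univ <|
    (isPreconnected_range (hpath x y).somePath.continuous).subset_connectedComponentIn
      ⟨0, Path.source _⟩ (subset_univ _) ⟨1, Path.target _⟩

theorem IsLocallyArcConnected.disjoint_connectedComponentIn_of_mem_range [T2Space X]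
    (hX : IsLocallyArcConnected X) (huniq : HasUniqueArcs X) {x y v : X}
    {γ : Path x y} (hγ : Injective γ) (hv : v ∈ range γ) :
    Disjoint (connectedComponentIn {v}ᶜ x) (connectedComponentIn {v}ᶜ y) := by
  rcases eq_or_ne v x with rfl | hvx
  · simp [connectedComponentIn_eq_empty]
  rcases eq_or_ne v y with rfl | hvy
  · simp [connectedComponentIn_eq_empty]
  refine Set.disjoint_left.2 fun z hzx hzy => ?_
  have hy : y ∈ connectedComponentIn {v}ᶜ x := by
    rw [connectedComponentIn_eq hzx, ← connectedComponentIn_eq hzy]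
    exact mem_connectedComponentIn hvy.symm
  rcases hX.arcJoinedIn_of_mem_connectedComponentIn isOpen_compl_singleton hy with
    rfl | ⟨p, hp, hpv⟩
  · exact zero_ne_one (hγ (γ.source.trans γ.target.symm))
  · exact hpv (huniq x y γ p hγ hp ▸ hv) rfl

theorem IsLocallyArcConnected.compl_connectedComponentIn_subset [T2Space X]
    (hX : IsLocallyArcConnected X) (hpath : ∀ x y : X, Joined x y) {Q Q' y : X}
    (h : Q' ∈ connectedComponentIn {Q}ᶜ y) :
    (connectedComponentIn {Q}ᶜ y)ᶜ ⊆ connectedComponentIn {Q'}ᶜ Q := by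
  intro z hz
  have hQ'Q : Q' ≠ Q := connectedComponentIn_subset _ _ h
  rcases hX.arcJoinedIn_univ hpath z Q with rfl | ⟨p, hp, -⟩
  · exact mem_connectedComponentIn hQ'Q.symm
  have hQ'p : Q' ∉ range p := by
    rintro ⟨t, rfl⟩
    have ht := p.mem_connectedComponentIn_compl_target hp
      fun (ht : t = 1) => hQ'Q (by rw [ht, p.target])
    apply hz
    rw [connectedComponentIn_eq h, ← connectedComponentIn_eq ht]
    exact mem_connectedComponentIn (connectedComponentIn_nonempty_iff.1 ⟨_, ht⟩)
  exact (isPreconnected_range p.continuous).subset_connectedComponentIn ⟨1, p.target⟩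
    (fun w hw (hwQ' : w = Q') => hQ'p (hwQ' ▸ hw)) ⟨0, p.source⟩

end LocallyArcConnected

theorem measure_le_half_or_measure_le_half {X : Type*} [MeasurableSpace X]
    [MeasurableSingletonClass X] {ν : Measure X} [IsProbabilityMeasure ν] {s : Finset X}
    (hs : ν (↑s)ᶜ = 0) {A B : Set X} (hAB : Disjoint A B) : ν A ≤ 1 / 2 ∨ ν B ≤ 1 / 2 := by
  have hsum : ν A + ν B ≤ 1 := calc
    ν A + ν B = ν (A ∩ ↑s) + ν (B ∩ ↑s) := by rw [measure_inter_conull hs, measure_inter_conull hs]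
    _ = ν (A ∩ ↑s ∪ B ∩ ↑s) := (measure_union (hAB.mono inter_subset_left inter_subset_left)
      (s.finite_toSet.subset inter_subset_right).measurableSet).symm
    _ ≤ 1 := prob_le_one
  by_contra! h
  exact (ENNReal.add_lt_add h.1 h.2).not_ge (by rwa [ENNReal.add_halves])

theorem exists_measure_eq_natCast_div {X : Type*} [MeasurableSpace X] [MeasurableSingletonClass X]
    {ν : Measure X} {s : Finset X} (hs : ν (↑s)ᶜ = 0) {c : ℝ≥0∞}
    (hmass : ∀ P, ∃ k : ℕ, ν {P} = k / c) (A : Set X) : ∃ n : ℕ, ν A = n / c := by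
  classical
  choose k hk using hmass
  refine ⟨∑ P ∈ s.filter (· ∈ A), k P, ?_⟩
  rw [← measure_inter_conull hs, show A ∩ ↑s = ↑(s.filter (· ∈ A)) by ext; simp [and_comm],
    ← sum_measure_singleton]
  simp only [hk, div_eq_mul_inv, ← Finset.sum_mul, Nat.cast_sum]

theorem ENNReal.natCast_div_natCast_sub_one_ne_half {n d : ℕ} (hd : Even d) :
    (n : ℝ≥0∞) / ((d : ℝ≥0∞) - 1) ≠ 1 / 2 := by
  rcases d with _ | D
  · rcases eq_or_ne n 0 with rfl | hn
    · simpa using (ENNReal.inv_ne_zero.2 ENNReal.ofNat_ne_top).symm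
    · simpa [ENNReal.div_zero (Nat.cast_ne_zero.2 hn)] using (ENNReal.inv_ne_top.2 two_ne_zero).symm
  · have hD : ¬ Even D := Nat.even_add_one.1 hd
    rw [Nat.cast_succ, ENNReal.add_sub_cancel_right ENNReal.one_ne_top]
    intro h
    rw [ENNReal.div_eq_div_iff two_ne_zero ENNReal.ofNat_ne_top
      (Nat.cast_ne_zero.2 (by rintro rfl; exact hD (by decide))) (ENNReal.natCast_ne_top D)] at h
    norm_cast at h
    exact hD ⟨n, by omega⟩

section Barycenter

variable {X : Type*} [TopologicalSpace X]

def IsBarycenter [MeasurableSpace X] (ν : Measure X) (Q : X) : Prop :=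
  ∀ x : X, x ≠ Q → ν (connectedComponentIn ({Q}ᶜ : Set X) x) ≤ 1 / 2

variable [MeasurableSpace X] {ν : Measure X} {s : Finset X}

theorem IsLocallyArcConnected.lowerSemicontinuous_measure_connectedComponentIn [T2Space X]
    (hX : IsLocallyArcConnected X) (hs : ν (↑s)ᶜ = 0) (x : X) :
    LowerSemicontinuous fun v => ν (connectedComponentIn {v}ᶜ x) := by
  intro v c hc
  have hstay : ∀ P ∈ s, ∀ᶠ v' in 𝓝 v,
      P ∈ connectedComponentIn {v}ᶜ x → P ∈ connectedComponentIn {v'}ᶜ x := by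
    intro P _
    by_cases hP : P ∈ connectedComponentIn {v}ᶜ x
    · obtain ⟨p, hp⟩ := (hX.arcJoinedIn_of_mem_connectedComponentIn isOpen_compl_singleton
        hP).joinedIn (connectedComponentIn_nonempty_iff.1 ⟨P, hP⟩)
      have hv : (range p)ᶜ ∈ 𝓝 v := (isCompact_range p.continuous).isClosed.isOpen_compl.mem_nhds
        (by rintro ⟨t, rfl⟩; exact hp t rfl)
      filter_upwards [hv] with v' hv' _
      exact (isPreconnected_range p.continuous).subset_connectedComponentIn ⟨0, p.source⟩
        (fun w hw (hwv : w = v') => hv' (hwv ▸ hw)) ⟨1, p.target⟩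
    · exact .of_forall fun _ h => absurd h hP
  filter_upwards [s.eventually_all.2 hstay] with v' hv'
  calc c < ν (connectedComponentIn {v}ᶜ x) := hc
    _ = ν (connectedComponentIn {v}ᶜ x ∩ ↑s) := (measure_inter_conull hs).symm
    _ ≤ ν (connectedComponentIn {v'}ᶜ x) := measure_mono fun P hP => hv' P hP.2 hP.1

theorem IsLocallyArcConnected.isBarycenter_unique [T2Space X] [IsProbabilityMeasure ν]
    (hX : IsLocallyArcConnected X) (hpath : ∀ x y : X, Joined x y)
    (hhalf : ∀ A : Set X, ν A ≠ 1 / 2) {Q Q' : X} (hQ : IsBarycenter ν Q)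
    (hQ' : IsBarycenter ν Q') : Q = Q' := by
  by_contra hne
  set C := connectedComponentIn {Q}ᶜ Q'
  set C' := connectedComponentIn {Q'}ᶜ Q
  have hCC' : Cᶜ ⊆ C' := hX.compl_connectedComponentIn_subset hpath
    (mem_connectedComponentIn (Ne.symm hne))
  have hcover : 1 ≤ ν C + ν C' := calc
    1 = ν (C ∪ Cᶜ) := by rw [union_compl_self, measure_univ]
    _ ≤ ν C + ν Cᶜ := measure_union_le _ _
    _ ≤ ν C + ν C' := by gcongr
  refine hhalf C (le_antisymm (hQ Q' (Ne.symm hne)) (not_lt.1 fun hlt => ?_))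
  exact (ENNReal.add_lt_add_of_lt_of_le (by norm_num) hlt (hQ' Q hne)).not_ge
    (by rwa [ENNReal.add_halves])

open Classical in
theorem IsLocallyArcConnected.exists_isBarycenter_or_card_lt [T2Space X]
    [MeasurableSingletonClass X] [IsProbabilityMeasure ν] (hX : IsLocallyArcConnected X)
    (hpath : ∀ x y : X, Joined x y) (huniq : HasUniqueArcs X) (hs : ν (↑s)ᶜ = 0) {Q y₀ : X}
    (hC : 1 / 2 < ν (connectedComponentIn {Q}ᶜ y₀)) :
    ∃ Q', IsBarycenter ν Q' ∨ ∃ x, 1 / 2 < ν (connectedComponentIn {Q'}ᶜ x) ∧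
      (s.filter (· ∈ connectedComponentIn {Q'}ᶜ x)).card <
        (s.filter (· ∈ connectedComponentIn {Q}ᶜ y₀)).card := by
  set C := connectedComponentIn {Q}ᶜ y₀
  obtain ⟨y, hys, hyC⟩ : ∃ y ∈ s, y ∈ C := by
    by_contra! h
    exact hC.not_ge (by simp [measure_mono_null (fun z hz hzs => h z hzs hz) hs])
  have hCy : C = connectedComponentIn {Q}ᶜ y := connectedComponentIn_eq hyC
  obtain ⟨γ, hγ, -⟩ :=
    (hX.arcJoinedIn_univ hpath y Q).resolve_left (connectedComponentIn_subset _ _ hyC)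
  -- walking from `y` to `Q`, the side of `y` is light at the start and the side of `Q` at the end;
  -- both conditions are closed and one of them always holds, so at some point both hold
  let light (z : X) (t : unitInterval) := ν (connectedComponentIn {γ t}ᶜ z) ≤ 1 / 2
  have hclosed : ∀ z, IsClosed {t | light z t} := fun z =>
    ((hX.lowerSemicontinuous_measure_connectedComponentIn hs z).isClosed_preimage (1 / 2)).preimage
      γ.continuous
  obtain ⟨t, -, hty, htQ⟩ : (univ ∩ ({t | light y t} ∩ {t | light Q t})).Nonempty :=
    isPreconnected_closed_iff.1 isPreconnected_univ _ _ (hclosed y) (hclosed Q)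
      (fun t _ => measure_le_half_or_measure_le_half hs
        (hX.disjoint_connectedComponentIn_of_mem_range huniq hγ (mem_range_self t)))
      ⟨0, trivial, by simp [light, connectedComponentIn_eq_empty]⟩
      ⟨1, trivial, by simp [light, connectedComponentIn_eq_empty]⟩
  have ht : t ≠ 1 := by
    rintro rfl
    exact hC.not_ge (by simpa [light, hCy] using hty)
  refine ⟨γ t, or_iff_not_imp_left.2 fun hbar => ?_⟩
  obtain ⟨x, -, hx⟩ : ∃ x, x ≠ γ t ∧ 1 / 2 < ν (connectedComponentIn {γ t}ᶜ x) := by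
    simpa only [IsBarycenter, not_forall, not_le, exists_prop] using hbar
  have hheavy : ∀ z ∈ connectedComponentIn {γ t}ᶜ x, ¬ light z t := fun z hz hz' =>
    hx.not_ge (by rwa [connectedComponentIn_eq hz])
  have hXC : connectedComponentIn {γ t}ᶜ x ⊆ C := fun z hz => by_contra fun hzC => by
    have hzQ := hX.compl_connectedComponentIn_subset hpath
      (hCy ▸ γ.mem_connectedComponentIn_compl_target hγ ht) hzC
    exact hheavy z hz (by simpa [light, ← connectedComponentIn_eq hzQ] using htQ)
  refine ⟨x, hx, Finset.card_lt_card ((Finset.ssubset_iff_of_subset ?_).2 ⟨y, ?_, ?_⟩)⟩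
  · exact fun P hP => by simp only [Finset.mem_filter] at hP ⊢; exact ⟨hP.1, hXC hP.2⟩
  · simp [hys, hyC]
  · simpa [hys] using fun hy => hheavy y hy hty

theorem IsLocallyArcConnected.exists_isBarycenter [T2Space X] [MeasurableSingletonClass X]
    [IsProbabilityMeasure ν] (hX : IsLocallyArcConnected X) (hpath : ∀ x y : X, Joined x y)
    (huniq : HasUniqueArcs X) (hs : ν (↑s)ᶜ = 0) : ∃ Q, IsBarycenter ν Q := by
  classical
  obtain ⟨Q⟩ : Nonempty X := ν.nonempty_of_neZero
  by_cases hQ : IsBarycenter ν Q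
  · exact ⟨Q, hQ⟩
  obtain ⟨y₀, -, hC⟩ : ∃ y₀, y₀ ≠ Q ∧ 1 / 2 < ν (connectedComponentIn {Q}ᶜ y₀) := by
    simpa only [IsBarycenter, not_forall, not_le, exists_prop] using hQ
  clear hQ
  induction hn : (s.filter (· ∈ connectedComponentIn {Q}ᶜ y₀)).card using Nat.strong_induction_on
    generalizing Q y₀ with
  | _ n ih =>
    obtain ⟨Q', hQ' | ⟨x, hx, hlt⟩⟩ := hX.exists_isBarycenter_or_card_lt hpath huniq hs hC
    · exact ⟨Q', hQ'⟩
    · exact ih _ (hn ▸ hlt) Q' x hx rfl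

end Barycenter

open MeasureTheory in
theorem stmt_9_general {Γ : Type*} [MetricSpace Γ]
    [MeasurableSpace Γ] [BorelSpace Γ]
    (hpath : ∀ x y : Γ, Joined x y)
    (huniq : ∀ (x y : Γ) (p q : Path x y), Function.Injective p →
      Function.Injective q → Set.range p = Set.range q)
    (hsegs : ∃ (n : ℕ) (φ : Fin n → Set Γ), (⋃ i, φ i) = Set.univ ∧
      ∀ i, ∃ (a b : ℝ) (e : Set.Icc a b → Γ), Isometry e ∧ Set.range e = φ i)
    (ν : Measure Γ) [IsProbabilityMeasure ν]
    (hfin : ∃ s : Finset Γ, ν ((s : Set Γ))ᶜ = 0)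
    (d : ℕ) (heven : Even d)
    (hmass : ∀ P : Γ, ∃ k : ℕ, ν {P} = (k : ENNReal) / ((d : ENNReal) - 1)) :
    ∃! Q : Γ, ∀ x : Γ, x ≠ Q →
      ν (connectedComponentIn ({Q}ᶜ : Set Γ) x) ≤ 1 / 2 := by
  obtain ⟨n, φ, hcov, hφ⟩ := hsegs
  obtain ⟨s, hs⟩ := hfin
  have hX : IsLocallyArcConnected Γ := isLocallyArcConnected_of_iUnion_isometry hcov hφ
  have hhalf (A : Set Γ) : ν A ≠ 1 / 2 := by
    obtain ⟨n, hn⟩ := exists_measure_eq_natCast_div hs hmass A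
    exact hn ▸ ENNReal.natCast_div_natCast_sub_one_ne_half heven
  obtain ⟨Q, hQ⟩ := hX.exists_isBarycenter hpath huniq hs
  exact ⟨Q, hQ, fun Q' hQ' => hX.isBarycenter_unique hpath hhalf hQ' hQ⟩

open MeasureTheory in
/-- On a finite metric tree, if the masses of a finitely supported probability measure ν
are all integer multiples of 1/(d−1) with d even, then the barycenter of ν consists of a
single point. -/
theorem stmt_9 {Γ : Type*} [MetricSpace Γ] [CompactSpace Γ]
    [MeasurableSpace Γ] [BorelSpace Γ]
    (hpath : ∀ x y : Γ, Joined x y)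
    (huniq : ∀ (x y : Γ) (p q : Path x y), Function.Injective p →
      Function.Injective q → Set.range p = Set.range q)
    (hsegs : ∃ (n : ℕ) (φ : Fin n → Set Γ), (⋃ i, φ i) = Set.univ ∧
      ∀ i, ∃ (a b : ℝ) (e : Set.Icc a b → Γ), Isometry e ∧ Set.range e = φ i)
    (ν : Measure Γ) [IsProbabilityMeasure ν]
    (hfin : ∃ s : Finset Γ, ν ((s : Set Γ))ᶜ = 0)
    (d : ℕ) (hd : 2 ≤ d) (heven : Even d)
    (hmass : ∀ P : Γ, ∃ k : ℕ, ν {P} = (k : ENNReal) / ((d : ENNReal) - 1)) :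
    ∃! Q : Γ, ∀ x : Γ, x ≠ Q →
      ν (connectedComponentIn ({Q}ᶜ : Set Γ) x) ≤ 1 / 2 :=
  stmt_9_general hpath huniq hsegs ν hfin d heven hmass
end

section
/- Let k be an algebraically closed field, δ ≥ 2, and let φ̃ : P¹(k) → P¹(k) be a rational map of degree δ given by coprime homogeneous forms (F₀, G₀) of degree δ. If φ̃ has exactly one fixed point a ∈ P¹(k), then a is a fixed point of multiplicity δ + 1, the multiplier of φ̃ at a is 1, and a is not a critical point of φ̃ (the local degree of φ̃ at a is 1). -/
/-!
`H₀ = X G₀ - Y F₀` is a binary form of degree `δ + 1`. Over an algebraically closed field every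
projective zero `(a : b)` of a binary form splits off the linear factor `L = bX - aY` (modulo `L`,
`(X, Y) ≡ M • (a, b)` for a linear form `M`, so the form is `≡ M ^ n • value at (a, b)`), and
the quotient is again homogeneous; hence a form whose only zero is `(a : b)` is `c L ^ (δ + 1)`.
As `δ + 1 ≥ 2`, both partials of `H₀` vanish at `(a, b)`, which together with Euler's identity
for `F₀` or `G₀` gives the trace `(δ + 1) μ`. If `L ^ 2` divided `bF₀ - aG₀`, then the identities
`L F₀ = X (bF₀ - aG₀) + a H₀` and `L G₀ = Y (bF₀ - aG₀) + b H₀` would make `L` a common factor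
of `F₀` and `G₀`; coprimality likewise forces `μ ≠ 0`.
-/

namespace MvPolynomial

variable {σ R : Type*} [CommSemiring R] {φ : MvPolynomial σ R} {n : ℕ}

attribute [local instance] MvPolynomial.gradedAlgebra in
theorem IsHomogeneous.of_mul_left [NoZeroDivisors R] {ψ : MvPolynomial σ R} {i : ℕ}
    (hψ : ψ.IsHomogeneous i) (hψ0 : ψ ≠ 0) (h : (ψ * φ).IsHomogeneous (i + n)) :
    φ.IsHomogeneous n := by
  have hcomp (j : ℕ) :
      homogeneousComponent (i + j) (ψ * φ) = ψ * homogeneousComponent j φ := by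
    simpa only [← DirectSum.Decomposition.decompose'_eq, decomposition.decompose'_apply] using
      DirectSum.coe_decompose_mul_add_of_left_mem (homogeneousSubmodule σ R) (b := φ) (j := j)
        ((mem_homogeneousSubmodule i ψ).mpr hψ)
  intro d hd
  rw [show Finsupp.weight 1 d = d.degree by rw [Finsupp.degree_eq_weight_one]; rfl]
  by_contra hne
  have hzero : homogeneousComponent d.degree φ = 0 := by
    have h1 := hcomp d.degree
    rw [homogeneousComponent_of_mem ((mem_homogeneousSubmodule _ _).mpr h), if_neg (by omega)] at h1
    exact (mul_eq_zero.mp h1.symm).resolve_left hψ0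
  apply hd
  simpa [coeff_homogeneousComponent] using congrArg (coeff d) hzero

theorem eval_pderiv_eq_zero_of_sq_dvd {ψ : MvPolynomial σ R} {x : σ → R}
    (hψ : eval x ψ = 0) (h : ψ ^ 2 ∣ φ) (i : σ) : eval x (pderiv i φ) = 0 := by
  obtain ⟨χ, rfl⟩ := h
  simp [hψ]

theorem IsHomogeneous.sum_mul_eval_pderiv [Fintype σ] (hφ : φ.IsHomogeneous n) (x : σ → R) :
    ∑ i, x i * eval x (pderiv i φ) = n * eval x φ := by
  simpa using congrArg (eval x) hφ.sum_X_mul_pderiv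

theorem IsHomogeneous.aeval_smul {S : Type*} [CommSemiring S] [Algebra R S]
    (hφ : φ.IsHomogeneous n) (r : S) (f : σ → S) :
    MvPolynomial.aeval (r • f) φ = r ^ n * MvPolynomial.aeval f φ := by
  conv_lhs => rw [φ.as_sum]
  conv_rhs => rw [φ.as_sum]
  simp only [map_sum, Finset.mul_sum, aeval_monomial]
  refine Finset.sum_congr rfl fun v hv => ?_
  have hdeg : ∑ i ∈ v.support, v i = n := by
    simpa [Finsupp.weight_apply, Finsupp.sum] using hφ (mem_support_iff.mp hv)
  simp only [Pi.smul_apply, smul_eq_mul, mul_pow, Finsupp.prod_mul]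
  rw [Finsupp.prod, Finset.prod_pow_eq_pow_sum, hdeg]
  ring

theorem IsHomogeneous.eval_smul (hφ : φ.IsHomogeneous n) (r : R) (x : σ → R) :
    eval (r • x) φ = r ^ n * eval x φ := by
  simpa using hφ.aeval_smul r x

theorem IsHomogeneous.natDegree_aeval_X_one_le {ψ : MvPolynomial (Fin 2) R}
    (hψ : ψ.IsHomogeneous n) :
    (MvPolynomial.aeval ![(Polynomial.X : Polynomial R), 1] ψ).natDegree ≤ n := by
  conv_lhs => rw [ψ.as_sum]
  rw [map_sum]
  refine Polynomial.natDegree_sum_le_of_forall_le _ _ fun v hv => ?_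
  have hdeg : v.degree = n := by
    simpa [Finsupp.weight_apply, Finsupp.sum, Finsupp.degree_apply] using
      hψ (mem_support_iff.mp hv)
  rw [aeval_monomial, Finsupp.prod_fintype _ _ (by simp), Fin.prod_univ_two]
  simp only [Matrix.cons_val_zero, Matrix.cons_val_one, Matrix.cons_val_fin_one, one_pow, mul_one,
    Polynomial.algebraMap_eq]
  exact (Polynomial.natDegree_C_mul_X_pow_le _ _).trans (hdeg ▸ Finsupp.le_degree 0 v)

section BinaryForm

variable {k : Type*} [Field k]

noncomputable def linearFormAt (a b : k) : MvPolynomial (Fin 2) k := C b * X 0 - C a * X 1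

@[simp]
theorem eval_linearFormAt (a b : k) (x : Fin 2 → k) :
    eval x (linearFormAt a b) = b * x 0 - a * x 1 := by
  simp [linearFormAt]

theorem isHomogeneous_linearFormAt (a b : k) : (linearFormAt a b).IsHomogeneous 1 :=
  (isHomogeneous_C_mul_X b 0).sub (isHomogeneous_C_mul_X a 1)

theorem linearFormAt_ne_zero {a b : k} (hab : ¬(a = 0 ∧ b = 0)) : linearFormAt a b ≠ 0 := by
  intro h
  have h0 := congrArg (eval ![1, 0]) h
  have h1 := congrArg (eval ![0, 1]) h
  simp only [eval_linearFormAt, map_zero] at h0 h1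
  exact hab ⟨by simpa using h1, by simpa using h0⟩

theorem not_isUnit_linearFormAt (a b : k) : ¬IsUnit (linearFormAt a b) := fun h =>
  (h.map (eval ![a, b])).ne_zero (by simp [mul_comm])

theorem linearFormAt_dvd_of_eval_eq_zero {ψ : MvPolynomial (Fin 2) k} (hψ : ψ.IsHomogeneous n)
    {a b : k} (hab : ¬(a = 0 ∧ b = 0)) (h0 : eval ![a, b] ψ = 0) : linearFormAt a b ∣ ψ := by
  obtain ⟨u, v, huv⟩ : ∃ u v : k, a * u + b * v = 1 := by
    rcases not_and_or.mp hab with ha | hb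
    · exact ⟨a⁻¹, 0, by simp [ha]⟩
    · exact ⟨0, b⁻¹, by simp [hb]⟩
  have hC : C a * C u + C b * C v = (1 : MvPolynomial (Fin 2) k) := by
    rw [← map_mul, ← map_mul, ← map_add, huv, map_one]
  let π := Ideal.Quotient.mkₐ k (Ideal.span {linearFormAt a b})
  have hX : π ∘ X = π (C u * X 0 + C v * X 1) • (algebraMap k _ ∘ ![a, b]) := by
    funext i
    simp only [Function.comp_apply, Pi.smul_apply, smul_eq_mul, ← π.commutes, ← map_mul]
    refine Ideal.Quotient.eq.mpr (Ideal.mem_span_singleton.mpr ?_)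
    fin_cases i
    · exact ⟨C v, by simp [linearFormAt]; linear_combination -(X 0) * hC⟩
    · exact ⟨-C u, by simp [linearFormAt]; linear_combination -(X 1) * hC⟩
  have hπ : π ψ = 0 := by
    rw [← DFunLike.congr_fun (aeval_unique π).symm ψ, hX, hψ.aeval_smul, aeval_algebraMap_apply,
      aeval_eq_eval, h0, map_zero, mul_zero]
  exact Ideal.mem_span_singleton.mp (Ideal.Quotient.eq_zero_iff_mem.mp hπ)

theorem IsHomogeneous.exists_eval_eq_zero [IsAlgClosed k] {ψ : MvPolynomial (Fin 2) k}
    (hψ : ψ.IsHomogeneous n) (hn : n ≠ 0) :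
    ∃ x y : k, ¬(x = 0 ∧ y = 0) ∧ eval ![x, y] ψ = 0 := by
  obtain ⟨p, hp⟩ : ∃ p, MvPolynomial.aeval ![(Polynomial.X : Polynomial k), 1] ψ = p := ⟨_, rfl⟩
  have hpψ : p.homogenize n = ψ := Polynomial.homogenize_eq_of_isHomogeneous hψ hp
  rcases (hp ▸ hψ.natDegree_aeval_X_one_le).lt_or_eq with hlt | heq
  · have hψ_eq : ψ = p.homogenize p.natDegree * X 1 ^ (n - p.natDegree) := by
      rw [← hpψ, ← Polynomial.homogenize_one, ← Polynomial.homogenize_mul p 1 le_rfl (by simp),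
        mul_one, Nat.add_sub_cancel' hlt.le]
    refine ⟨1, 0, by simp, ?_⟩
    simp [hψ_eq, Nat.sub_ne_zero_of_lt hlt]
  · obtain ⟨t, ht⟩ := IsAlgClosed.exists_root p (Polynomial.degree_ne_of_natDegree_ne (heq ▸ hn))
    refine ⟨t, 1, by simp, ?_⟩
    rw [← hpψ, Polynomial.eval_homogenize heq.le _ (by simp)]
    simp [ht.eq_zero]

theorem IsHomogeneous.eq_C_mul_linearFormAt_pow [IsAlgClosed k] {a b : k}
    (hab : ¬(a = 0 ∧ b = 0)) {ψ : MvPolynomial (Fin 2) k} (hψ : ψ.IsHomogeneous n) (hψ0 : ψ ≠ 0)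
    (huniq : ∀ x y : k, ¬(x = 0 ∧ y = 0) → eval ![x, y] ψ = 0 →
      ∃ t : k, t ≠ 0 ∧ x = t * a ∧ y = t * b) :
    ∃ c : k, c ≠ 0 ∧ ψ = C c * linearFormAt a b ^ n := by
  induction n generalizing ψ with
  | zero =>
    have hC := totalDegree_eq_zero_iff_eq_C.mp (Nat.le_zero.mp hψ.totalDegree_le)
    exact ⟨coeff 0 ψ, fun h => hψ0 (by rw [hC, h, map_zero]), by rw [pow_zero, mul_one, ← hC]⟩
  | succ n ih =>
    obtain ⟨x, y, hxy, hzero⟩ := hψ.exists_eval_eq_zero n.succ_ne_zero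
    obtain ⟨t, ht, rfl, rfl⟩ := huniq x y hxy hzero
    have hroot : eval ![a, b] ψ = 0 := by
      have hscale := hψ.eval_smul t ![a, b]
      simp only [Matrix.smul_cons, smul_eq_mul, Matrix.smul_empty, hzero] at hscale
      exact (mul_eq_zero.mp hscale.symm).resolve_left (pow_ne_zero _ ht)
    obtain ⟨χ, rfl⟩ := linearFormAt_dvd_of_eval_eq_zero hψ hab hroot
    have hχ : χ.IsHomogeneous n := (isHomogeneous_linearFormAt a b).of_mul_left
      (linearFormAt_ne_zero hab) (by rwa [add_comm] at hψ)
    obtain ⟨c, hc, rfl⟩ := ih hχ (right_ne_zero_of_mul hψ0)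
      fun x y hxy hz => huniq x y hxy (by simp [hz])
    exact ⟨c, hc, by ring⟩

theorem exists_eval_eq_mul_of_isRelPrime {δ : ℕ} {F G : MvPolynomial (Fin 2) k}
    (hF : F.IsHomogeneous δ) (hG : G.IsHomogeneous δ) (hcop : IsRelPrime F G)
    {a b : k} (hab : ¬(a = 0 ∧ b = 0)) (hfix : eval ![a, b] (X 0 * G - X 1 * F) = 0) :
    ∃ μ : k, μ ≠ 0 ∧ eval ![a, b] F = μ * a ∧ eval ![a, b] G = μ * b := by
  have hcross : a * eval ![a, b] G = b * eval ![a, b] F := by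
    simpa [sub_eq_zero] using hfix
  obtain ⟨μ, hFa, hGb⟩ : ∃ μ, eval ![a, b] F = μ * a ∧ eval ![a, b] G = μ * b := by
    rcases not_and_or.mp hab with ha | hb
    · exact ⟨eval ![a, b] F / a, by field_simp, by field_simp; linear_combination hcross⟩
    · exact ⟨eval ![a, b] G / b, by field_simp; linear_combination -hcross, by field_simp⟩
  refine ⟨μ, fun hμ => not_isUnit_linearFormAt a b (hcop ?_ ?_), hFa, hGb⟩
  · exact linearFormAt_dvd_of_eval_eq_zero hF hab (by simp [hFa, hμ])
  · exact linearFormAt_dvd_of_eval_eq_zero hG hab (by simp [hGb, hμ])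

theorem eval_pderiv_add_eval_pderiv_of_sq_dvd {δ : ℕ} {F G : MvPolynomial (Fin 2) k}
    (hF : F.IsHomogeneous δ) (hG : G.IsHomogeneous δ) {a b μ : k} (hab : ¬(a = 0 ∧ b = 0))
    (hsq : linearFormAt a b ^ 2 ∣ X 0 * G - X 1 * F)
    (hFa : eval ![a, b] F = μ * a) (hGb : eval ![a, b] G = μ * b) :
    eval ![a, b] (pderiv 0 F) + eval ![a, b] (pderiv 1 G) = ((δ : k) + 1) * μ := by
  have hL : eval ![a, b] (linearFormAt a b) = 0 := by simp [mul_comm]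
  have h0 := eval_pderiv_eq_zero_of_sq_dvd hL hsq 0
  have h1 := eval_pderiv_eq_zero_of_sq_dvd hL hsq 1
  have eF := hF.sum_mul_eval_pderiv ![a, b]
  have eG := hG.sum_mul_eval_pderiv ![a, b]
  simp only [map_sub, Derivation.leibniz, smul_eq_mul, pderiv_X, Pi.single_eq_same,
    Pi.single_eq_of_ne, one_ne_zero, zero_ne_one, ne_eq, not_false_eq_true, mul_one, mul_zero,
    add_zero, map_add, map_mul, eval_X, Matrix.cons_val_zero, Matrix.cons_val_one,
    Matrix.cons_val_fin_one, Fin.sum_univ_two] at h0 h1 eF eG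
  rcases not_and_or.mp hab with ha | hb
  · apply mul_left_cancel₀ ha
    linear_combination eF + h1 + ((δ : k) + 1) * hFa
  · apply mul_left_cancel₀ hb
    linear_combination eG - h0 + ((δ : k) + 1) * hGb

theorem not_sq_dvd_of_isRelPrime {F G : MvPolynomial (Fin 2) k} (hcop : IsRelPrime F G)
    {a b : k} (hab : ¬(a = 0 ∧ b = 0)) (hsq : linearFormAt a b ^ 2 ∣ X 0 * G - X 1 * F) :
    ¬linearFormAt a b ^ 2 ∣ C b * F - C a * G := by
  intro hdvd
  have hL0 := linearFormAt_ne_zero hab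
  have hLF : linearFormAt a b * F = X 0 * (C b * F - C a * G) + C a * (X 0 * G - X 1 * F) := by
    unfold linearFormAt; ring
  have hLG : linearFormAt a b * G = X 1 * (C b * F - C a * G) + C b * (X 0 * G - X 1 * F) := by
    unfold linearFormAt; ring
  refine not_isUnit_linearFormAt a b (hcop ?_ ?_)
  · rw [← mul_dvd_mul_iff_left hL0, ← pow_two, hLF]
    exact dvd_add (hdvd.mul_left _) (hsq.mul_left _)
  · rw [← mul_dvd_mul_iff_left hL0, ← pow_two, hLG]
    exact dvd_add (hdvd.mul_left _) (hsq.mul_left _)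

end BinaryForm

end MvPolynomial

open MvPolynomial in
/-- If a degree-`δ ≥ 2` rational map `φ̃ = (F₀ : G₀)` on `P¹(k)` (coprime homogeneous
forms, `k` algebraically closed) has exactly one fixed point `(a : b)` — the unique
projective zero of `H₀ = X·G₀ − Y·F₀` — then `(a : b)` is a fixed point of multiplicity
`δ + 1` (i.e. `H₀ = c (bX − aY)^{δ+1}`), the multiplier of `φ̃` at it is `1`
(chart-free: with `F₀(a,b) = μa`, `G₀(a,b) = μb`, the trace `∂_X F₀ + ∂_Y G₀` at `(a,b)`
equals `(δ+1)μ`), and it is not a critical point (the fiber polynomial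
`b·F₀ − a·G₀` is not divisible by `(bX − aY)²`, i.e. the local degree is `1`). -/
theorem stmt_16 {k : Type*} [Field k] [IsAlgClosed k] (δ : ℕ) (hδ : 2 ≤ δ)
    (F₀ G₀ : MvPolynomial (Fin 2) k)
    (hF : F₀.IsHomogeneous δ) (hG : G₀.IsHomogeneous δ)
    (hcop : ∀ D : MvPolynomial (Fin 2) k, D ∣ F₀ → D ∣ G₀ → IsUnit D)
    (H₀ : MvPolynomial (Fin 2) k) (hH : H₀ = X 0 * G₀ - X 1 * F₀) (hH0 : H₀ ≠ 0)
    (a b : k) (hab : ¬(a = 0 ∧ b = 0)) (hroot : eval ![a, b] H₀ = 0)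
    (huniq : ∀ a' b' : k, ¬(a' = 0 ∧ b' = 0) → eval ![a', b'] H₀ = 0 →
      ∃ t : k, t ≠ 0 ∧ a' = t * a ∧ b' = t * b) :
    ∃ (c μ : k), c ≠ 0 ∧ μ ≠ 0 ∧
      H₀ = C c * (C b * X 0 - C a * X 1) ^ (δ + 1) ∧
      eval ![a, b] F₀ = μ * a ∧ eval ![a, b] G₀ = μ * b ∧
      eval ![a, b] (pderiv 0 F₀) + eval ![a, b] (pderiv 1 G₀) = ((δ : k) + 1) * μ ∧
      ¬ ((C b * X 0 - C a * X 1) ^ 2 ∣ (C b * F₀ - C a * G₀)) := by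
  subst hH
  have hHhom : (X 0 * G₀ - X 1 * F₀).IsHomogeneous (δ + 1) := by
    rw [add_comm]
    exact ((isHomogeneous_X k 0).mul hG).sub ((isHomogeneous_X k 1).mul hF)
  obtain ⟨c, hc, hfac⟩ := hHhom.eq_C_mul_linearFormAt_pow hab hH0 huniq
  have hsq : linearFormAt a b ^ 2 ∣ X 0 * G₀ - X 1 * F₀ :=
    hfac ▸ (pow_dvd_pow _ (by omega)).mul_left _
  obtain ⟨μ, hμ, hFa, hGb⟩ := exists_eval_eq_mul_of_isRelPrime hF hG (fun D => hcop D) hab hroot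
  exact ⟨c, μ, hc, hμ, hfac, hFa, hGb, eval_pderiv_add_eval_pderiv_of_sq_dvd hF hG hab hsq hFa hGb,
    not_sq_dvd_of_isRelPrime (fun D => hcop D) hab hsq⟩
end
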